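/- Let 0 < ε < (3 − 2√2)/4, let n ≥ 3, and let f be an n-variable Boolean function with d(f, ℓ_{ω̂}) ≤ (1 + (3 − 2√2 − 4ε))·2^{n−3} (an inequality of real numbers) for some ω̂ ∈ {0,1}^n. Then W_f(ω̂) ≥ 2^n − (4 − 2√2 − 4ε)·2^{n−2}, and the probability W_f(ω̂)²/2^{2n} that the Deutsch–Jozsa measurement outputs ω̂ satisfies W_f(ω̂)²/2^{2n} ≥ (1/√2 + ε)² > 1/2 + ε. -/
import Mathlib

/-- Walsh transform of an n-variable Boolean function at point ω. -/
def walsh {n : ℕ} (f : (Fin n → ZMod 2) → ZMod 2) (ω : Fin n → ZMod 2) : ℤ :=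
  ∑ x : Fin n → ZMod 2, (-1 : ℤ) ^ (f x + ∑ i, ω i * x i).val

/-- The linear Boolean function x ↦ ω·x. -/
def linfun {n : ℕ} (ω : Fin n → ZMod 2) : (Fin n → ZMod 2) → ZMod 2 :=
  fun x => ∑ i, ω i * x i

/-- Hamming distance between two n-variable Boolean functions. -/
def hamming {n : ℕ} (f g : (Fin n → ZMod 2) → ZMod 2) : ℕ :=
  (Finset.univ.filter fun x => f x ≠ g x).card

lemma walsh_eq {n : ℕ} (f : (Fin n → ZMod 2) → ZMod 2) (ω : Fin n → ZMod 2) :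
    walsh f ω = 2^n - 2 * hamming f (linfun ω) := by
  classical
  have key : ∀ a b : ZMod 2, ((-1:ℤ)^(a+b).val) = if a ≠ b then -1 else 1 := by decide
  unfold walsh hamming linfun
  calc ∑ x : Fin n → ZMod 2, (-1 : ℤ) ^ (f x + ∑ i, ω i * x i).val
      = ∑ x : Fin n → ZMod 2, if f x ≠ (fun x => ∑ i, ω i * x i) x then (-1:ℤ) else 1 :=
        Finset.sum_congr rfl (fun x _ => key _ _)
    _ = _ := by
        rw [Finset.sum_ite, Finset.sum_const, Finset.sum_const]
        have hcard := Finset.card_filter_add_card_filter_not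
          (s := (Finset.univ : Finset (Fin n → ZMod 2)))
          (p := fun x => f x ≠ (fun x => ∑ i, ω i * x i) x)
        have huniv : (Finset.univ : Finset (Fin n → ZMod 2)).card = 2^n := by
          simp [Finset.card_univ]
        push_neg at hcard
        rw [huniv] at hcard
        have hcc : (Finset.filter (fun x => ¬ f x ≠ (fun x => ∑ i, ω i * x i) x)
            Finset.univ).card
            = (Finset.filter (fun a => f a = ∑ i, ω i * a i) Finset.univ).card := by
          simp only [not_not]
        simp only [nsmul_eq_mul, smul_eq_mul, mul_one, mul_neg_one, hcc]
        have hz : ((Finset.filter (fun x => f x ≠ ∑ i, ω i * x i) Finset.univ).card : ℤ)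
            + (Finset.filter (fun a => f a = ∑ i, ω i * a i) Finset.univ).card = 2^n := by
          exact_mod_cast hcard
        linarith [hz]

theorem stmt_15 {n : ℕ} (hn : 3 ≤ n) (ε : ℝ) (hε : 0 < ε)
    (hε' : ε < (3 - 2 * Real.sqrt 2) / 4) (f : (Fin n → ZMod 2) → ZMod 2)
    (ω' : Fin n → ZMod 2)
    (h : (hamming f (linfun ω') : ℝ) ≤ (1 + (3 - 2 * Real.sqrt 2 - 4 * ε)) * 2 ^ (n - 3)) :
    ((walsh f ω' : ℝ) ≥ 2 ^ n - (4 - 2 * Real.sqrt 2 - 4 * ε) * 2 ^ (n - 2)) ∧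
    ((walsh f ω' : ℝ) ^ 2 / 2 ^ (2 * n) ≥ (1 / Real.sqrt 2 + ε) ^ 2) ∧
    ((1 / Real.sqrt 2 + ε) ^ 2 > 1 / 2 + ε) := by
  have hs2 : Real.sqrt 2 ^ 2 = 2 := Real.sq_sqrt (by norm_num)
  have hs0 : (0:ℝ) < Real.sqrt 2 := Real.sqrt_pos.mpr (by norm_num)
  have hs1 : (1:ℝ) < Real.sqrt 2 := by nlinarith
  have hW : (walsh f ω' : ℝ) = 2^n - 2 * (hamming f (linfun ω') : ℝ) := by
    have := walsh_eq f ω'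
    have : ((walsh f ω' : ℤ) : ℝ) = ((2^n - 2 * hamming f (linfun ω') : ℤ) : ℝ) := by
      exact_mod_cast congrArg (Int.cast : ℤ → ℝ) this
    push_cast at this
    linarith [this]
  -- powers
  have hp3 : (2:ℝ)^n = 8 * 2^(n-3) := by
    have hnn : n - 3 + 3 = n := by omega
    calc (2:ℝ)^n = 2^(n-3+3) := by rw [hnn]
    _ = 8 * 2^(n-3) := by rw [pow_add]; ring
  have hp2 : (2:ℝ)^(n-2) = 2 * 2^(n-3) := by
    rw [show n-2 = (n-3)+1 by omega, pow_succ]; ring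
  have hpos3 : (0:ℝ) < 2^(n-3) := by positivity
  have first : (walsh f ω' : ℝ) ≥ 2 ^ n - (4 - 2 * Real.sqrt 2 - 4 * ε) * 2 ^ (n - 2) := by
    rw [hW, hp2]; nlinarith [h]
  have hWc : (walsh f ω' : ℝ) ≥ (1 / Real.sqrt 2 + ε) * 2^n := by
    have h4 : 4 / Real.sqrt 2 = 2 * Real.sqrt 2 := by
      rw [div_eq_iff (ne_of_gt hs0)]; nlinarith
    have : (1 / Real.sqrt 2 + ε) * 2^n = (2 * Real.sqrt 2 + 4*ε) * 2^(n-3) * 2 := by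
      rw [hp3]; field_simp; nlinarith [hp3]
    rw [this]
    calc (walsh f ω' : ℝ) ≥ 2 ^ n - (4 - 2 * Real.sqrt 2 - 4 * ε) * 2 ^ (n - 2) := first
    _ = (2 * Real.sqrt 2 + 4*ε) * 2^(n-3) * 2 := by rw [hp3, hp2]; ring
  have hc0 : (0:ℝ) ≤ (1 / Real.sqrt 2 + ε) * 2^n := by positivity
  refine ⟨first, ?_, ?_⟩
  · rw [ge_iff_le, le_div_iff₀ (by positivity)]
    have h2n : (2:ℝ)^(2*n) = (2^n)^2 := by rw [mul_comm, pow_mul]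
    have hsq := pow_le_pow_left₀ hc0 hWc 2
    rw [mul_pow] at hsq
    rw [h2n]; linarith [hsq]
  · have h12 : 1 / Real.sqrt 2 = Real.sqrt 2 / 2 := by
      rw [div_eq_div_iff hs0.ne' two_ne_zero]; nlinarith
    rw [h12]
    nlinarith [mul_pos hε hε, mul_pos (sub_pos.mpr hs1) hε]
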